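/- Let u ∈ C²[0, t_{j+1}] with uniform grid t_s = sτ, and set M₂ = max_{0 ≤ t ≤ t_{j+1}} |u''(t)|. Then the error of the half-layer L1 approximation satisfies |∂₀ₜ^α u(t_{j+1/2}) - Δ₀ₜ^α u| ≤ (2^α M₂ / (4 Γ(2-α))) ((1-α)/2 + 1) τ^{2-α}. -/

import Mathlib

open Real Set Finset

/-- The Caputo fractional derivative of order α ∈ (0,1) of u at time t. -/
noncomputable def caputo (α : ℝ) (u : ℝ → ℝ) (t : ℝ) : ℝ :=
  (1 / Real.Gamma (1 - α)) * ∫ η in (0 : ℝ)..t, deriv u η * (t - η) ^ (-α)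

/-- The coefficients of the half-layer L1 approximation. -/
noncomputable def cL1 (α : ℝ) : ℕ → ℝ := fun j =>
  if j = 0 then (2 : ℝ) ^ (α - 1)
  else ((j : ℝ) + 1/2) ^ (1 - α) - ((j : ℝ) - 1/2) ^ (1 - α)

/-!
Split `[0, t_{j+1/2}]` into the cells `[t_s, t_{s+1}]`, `s < j`, and the half cell
`[t_j, t_{j+1/2}]`. The scheme replaces `u'` on each of them by the slope of `u` over
`[t_s, t_{s+1}]`, and `τ^{1-α} c_{j-s} / (1 - α)` is exactly the integral of the kernel
`(t_{j+1/2} - η)^{-α}` over the corresponding cell. On a full cell, integration by parts turns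
the error into the linear-interpolation error of `u` (at most `M₂ τ² / 8`) integrated against
the increasing kernel, so these contributions telescope to at most `M₂ τ² / 8 · (τ / 2)^{-α}`.
On the half cell, `|u' - slope| ≤ M₂ τ / 2` is integrated against the kernel directly.
-/

open intervalIntegral
open MeasureTheory (volume ae_of_all)
open scoped NNReal

section Interpolation

variable {u f : ℝ → ℝ} {K : ℝ≥0} {a b c : ℝ}

theorem integral_abs_sub_of_mem_Icc (hc : c ∈ Icc a b) :
    ∫ x in a..b, |x - c| = ((c - a) ^ 2 + (b - c) ^ 2) / 2 := by
  have hl : ∫ x in a..c, |x - c| = ∫ x in a..c, (c - x) :=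
    integral_congr fun x hx => by
      rw [uIcc_of_le hc.1] at hx
      rw [abs_of_nonpos (by linarith [hx.2]), neg_sub]
  have hr : ∫ x in c..b, |x - c| = ∫ x in c..b, (x - c) :=
    integral_congr fun x hx => by
      rw [uIcc_of_le hc.2] at hx
      exact abs_of_nonneg (by linarith [hx.1])
  have hi : Continuous fun x : ℝ => |x - c| := by fun_prop
  rw [← integral_add_adjacent_intervals (hi.intervalIntegrable a c) (hi.intervalIntegrable c b),
    hl, hr]
  simp [integral_comp_sub_left (fun x => x), integral_comp_sub_right (fun x => x)]
  ring

theorem abs_sub_sub_mul_le_of_lipschitzOnWith (hu : ∀ x ∈ Icc a b, HasDerivAt u (f x) x)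
    (hf : LipschitzOnWith K f (Icc a b)) (hc : c ∈ Icc a b) :
    |u b - u a - (b - a) * f c| ≤ K * ((c - a) ^ 2 + (b - c) ^ 2) / 2 := by
  have hab : a ≤ b := hc.1.trans hc.2
  rw [← uIcc_of_le hab] at hu hf
  have hfi : IntervalIntegrable f volume a b := hf.continuousOn.intervalIntegrable
  have hftc : ∫ x in a..b, (f x - f c) = u b - u a - (b - a) * f c := by
    rw [integral_sub hfi intervalIntegrable_const, integral_eq_sub_of_hasDerivAt hu hfi,
      integral_const, smul_eq_mul]
  rw [← hftc]
  calc |∫ x in a..b, (f x - f c)| ≤ ∫ x in a..b, K * |x - c| := by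
        rw [← Real.norm_eq_abs]
        refine norm_integral_le_of_norm_le hab (ae_of_all _ fun x hx => ?_)
          ((continuous_const.mul (continuous_id.sub continuous_const).abs).intervalIntegrable a b)
        have hx' : x ∈ uIcc a b := by rw [uIcc_of_le hab]; exact Ioc_subset_Icc_self hx
        have hc' : c ∈ uIcc a b := by rwa [uIcc_of_le hab]
        simpa [Real.dist_eq] using hf.dist_le_mul x hx' c hc'
    _ = K * ((c - a) ^ 2 + (b - c) ^ 2) / 2 := by
        rw [integral_const_mul, integral_abs_sub_of_mem_Icc hc, mul_div_assoc]

theorem abs_sub_slope_le (hu : ∀ x ∈ Icc a b, HasDerivAt u (f x) x)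
    (hf : LipschitzOnWith K f (Icc a b)) (hab : a < b) {η : ℝ} (hη : η ∈ Icc a b) :
    |f η - slope u a b| ≤ K * (b - a) / 2 := by
  have h := abs_sub_sub_mul_le_of_lipschitzOnWith hu hf hη
  have hba : 0 < b - a := sub_pos.2 hab
  have e : f η - slope u a b = -(u b - u a - (b - a) * f η) / (b - a) := by
    rw [slope_def_field]; field_simp; ring
  rw [e, abs_div, abs_neg, abs_of_pos hba, div_le_iff₀ hba]
  nlinarith [mul_nonneg (sub_nonneg.2 hη.1) (sub_nonneg.2 hη.2), K.coe_nonneg]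

theorem abs_sub_sub_slope_mul_le (hu : ∀ x ∈ Icc a b, HasDerivAt u (f x) x)
    (hf : LipschitzOnWith K f (Icc a b)) (hab : a < b) {η : ℝ} (hη : η ∈ Icc a b) :
    |u η - u a - slope u a b * (η - a)| ≤ K * (b - a) ^ 2 / 8 := by
  obtain ⟨haη, hηb⟩ := hη
  have hP := abs_sub_sub_mul_le_of_lipschitzOnWith (fun x hx => hu x ⟨hx.1, hx.2.trans hηb⟩)
    (hf.mono (Icc_subset_Icc_right hηb)) (right_mem_Icc.2 haη)
  have hQ := abs_sub_sub_mul_le_of_lipschitzOnWith (fun x hx => hu x ⟨haη.trans hx.1, hx.2⟩)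
    (hf.mono (Icc_subset_Icc_left haη)) (left_mem_Icc.2 hηb)
  set P := u η - u a - (η - a) * f η
  set Q := u b - u η - (b - η) * f η
  have hba : 0 < b - a := sub_pos.2 hab
  -- the interpolation error is a convex combination of the two Taylor remainders about `η`
  have e : u η - u a - slope u a b * (η - a) = ((b - η) * P - (η - a) * Q) / (b - a) := by
    rw [slope_def_field]; field_simp; ring
  rw [e, abs_div, abs_of_pos hba, div_le_iff₀ hba]
  calc |(b - η) * P - (η - a) * Q| ≤ (b - η) * |P| + (η - a) * |Q| := by
        refine (abs_sub _ _).trans ?_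
        rw [abs_mul, abs_mul, abs_of_nonneg (sub_nonneg.2 hηb), abs_of_nonneg (sub_nonneg.2 haη)]
    _ ≤ (b - η) * (K * (η - a) ^ 2 / 2) + (η - a) * (K * (b - η) ^ 2 / 2) := by
        gcongr
        · simpa using hP
        · simpa using hQ
    _ ≤ K * (b - a) ^ 2 / 8 * (b - a) := by
        nlinarith [mul_nonneg (mul_nonneg K.coe_nonneg hba.le) (sq_nonneg (a + b - 2 * η))]

end Interpolation

theorem abs_integral_mul_le_of_hasDerivAt {G g k k' : ℝ → ℝ} {a b C : ℝ} (hab : a ≤ b)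
    (hG : ∀ x ∈ Icc a b, HasDerivAt G (g x) x) (hg : IntervalIntegrable g volume a b)
    (hk : ∀ x ∈ Icc a b, HasDerivAt k (k' x) x) (hk' : IntervalIntegrable k' volume a b)
    (hk'0 : ∀ x ∈ Icc a b, 0 ≤ k' x) (hGa : G a = 0) (hGb : G b = 0)
    (hGC : ∀ x ∈ Icc a b, |G x| ≤ C) :
    |∫ x in a..b, g x * k x| ≤ C * (k b - k a) := by
  rw [← uIcc_of_le hab] at hG hk
  have ibp := integral_mul_deriv_eq_deriv_mul hk hG hk' hg
  rw [hGa, hGb, mul_zero, mul_zero, sub_zero, zero_sub] at ibp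
  simp_rw [mul_comm (g _)]
  rw [ibp, abs_neg]
  calc |∫ x in a..b, k' x * G x| ≤ ∫ x in a..b, C * k' x := by
        rw [← Real.norm_eq_abs]
        refine norm_integral_le_of_norm_le hab (ae_of_all _ fun x hx => ?_) (hk'.const_mul C)
        have hx' := Ioc_subset_Icc_self hx
        rw [Real.norm_eq_abs, abs_mul, abs_of_nonneg (hk'0 x hx'), mul_comm]
        exact mul_le_mul_of_nonneg_right (hGC x hx') (hk'0 x hx')
    _ = C * (k b - k a) := by rw [integral_const_mul, integral_eq_sub_of_hasDerivAt hk hk']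

section Kernel

variable {α T : ℝ}

theorem integral_sub_rpow_neg (hα : α < 1) (a b : ℝ) :
    ∫ η in a..b, (T - η) ^ (-α) = ((T - a) ^ (1 - α) - (T - b) ^ (1 - α)) / (1 - α) := by
  rw [integral_comp_sub_left (fun x => x ^ (-α)), integral_rpow (Or.inl (by linarith)),
    neg_add_eq_sub]

theorem intervalIntegrable_mul_sub_rpow_neg (hα : α < 1) {g : ℝ → ℝ} {a b : ℝ}
    (hg : ContinuousOn g (uIcc a b)) :
    IntervalIntegrable (fun η => g η * (T - η) ^ (-α)) volume a b := by
  have h := (intervalIntegrable_rpow' (a := T - a) (b := T - b) (r := -α)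
    (by linarith)).comp_sub_left T
  simp only [sub_sub_cancel] at h
  exact h.continuousOn_mul hg

variable {u f : ℝ → ℝ} {K : ℝ≥0} {a b : ℝ}

theorem abs_integral_sub_slope_mul_rpow_neg_le (hα : 0 ≤ α)
    (hu : ∀ x ∈ Icc a b, HasDerivAt u (f x) x) (hf : LipschitzOnWith K f (Icc a b))
    (hab : a < b) (hbT : b < T) :
    |∫ η in a..b, (f η - slope u a b) * (T - η) ^ (-α)|
      ≤ K * (b - a) ^ 2 / 8 * ((T - b) ^ (-α) - (T - a) ^ (-α)) := by
  have hT : ∀ x ∈ Icc a b, 0 < T - x := fun x hx => by linarith [hx.2]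
  refine abs_integral_mul_le_of_hasDerivAt (G := fun η => u η - u a - slope u a b * (η - a))
    (k' := fun η => α * (T - η) ^ (-α - 1)) hab.le (fun x hx => ?_) ?_ (fun x hx => ?_) ?_
    (fun x hx => mul_nonneg hα (rpow_nonneg (hT x hx).le _)) (by simp) ?_
    (fun x hx => abs_sub_sub_slope_mul_le hu hf hab hx)
  · have h := ((hu x hx).sub_const (u a)).sub
      (((hasDerivAt_id' x).sub_const a).const_mul (slope u a b))
    rwa [mul_one] at h
  · exact (hf.continuousOn.sub continuousOn_const).intervalIntegrable_of_Icc hab.le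
  · simpa using ((hasDerivAt_id x).const_sub T).rpow_const (p := -α) (Or.inl (hT x hx).ne')
  · refine (continuousOn_const.mul fun x hx => ?_).intervalIntegrable_of_Icc hab.le
    exact ((continuous_const.sub continuous_id).continuousAt.rpow_const
      (Or.inl (hT x hx).ne')).continuousWithinAt
  · have h := sub_smul_slope u a b
    rw [smul_eq_mul, vsub_eq_sub, mul_comm] at h
    simp [h]

theorem abs_integral_sub_slope_mul_rpow_neg_le_of_mem (hα : α < 1)
    (hu : ∀ x ∈ Icc a b, HasDerivAt u (f x) x) (hf : LipschitzOnWith K f (Icc a b))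
    (hab : a < b) (hT : T ∈ Icc a b) :
    |∫ η in a..T, (f η - slope u a b) * (T - η) ^ (-α)|
      ≤ K * (b - a) / 2 * ((T - a) ^ (1 - α) / (1 - α)) := by
  calc |∫ η in a..T, (f η - slope u a b) * (T - η) ^ (-α)|
      ≤ ∫ η in a..T, K * (b - a) / 2 * (T - η) ^ (-α) := by
        rw [← Real.norm_eq_abs]
        refine norm_integral_le_of_norm_le hT.1 (ae_of_all _ fun x hx => ?_)
          (intervalIntegrable_mul_sub_rpow_neg hα continuousOn_const)
        have hTx : 0 ≤ T - x := sub_nonneg.2 hx.2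
        rw [Real.norm_eq_abs, abs_mul, abs_of_nonneg (rpow_nonneg hTx _)]
        exact mul_le_mul_of_nonneg_right
          (abs_sub_slope_le hu hf hab ⟨hx.1.le, hx.2.trans hT.2⟩) (rpow_nonneg hTx _)
    _ = K * (b - a) / 2 * ((T - a) ^ (1 - α) / (1 - α)) := by
        rw [intervalIntegral.integral_const_mul, integral_sub_rpow_neg hα, sub_self,
          zero_rpow (by linarith), sub_zero]

end Kernel

section HalfLayer

variable {α τ : ℝ}

theorem Gamma_two_sub (hα : α < 1) : Gamma (2 - α) = (1 - α) * Gamma (1 - α) := by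
  rw [show 2 - α = (1 - α) + 1 by ring, Gamma_add_one (by linarith)]

/-- The approximation `Δ₀ₜ^α u` of `∂₀ₜ^α u (t_{j+1/2})`. -/
noncomputable def halfLayerL1 (α τ : ℝ) (j : ℕ) (u : ℝ → ℝ) : ℝ :=
  (τ ^ (1 - α) / Real.Gamma (2 - α))
    * ∑ s ∈ Finset.range (j + 1),
        cL1 α (j - s) * (u (((s : ℝ) + 1) * τ) - u ((s : ℝ) * τ)) / τ

theorem integral_rpow_neg_eq_cL1 (hα : α < 1) (hτ : 0 ≤ τ) {j s : ℕ} (hs : s < j) :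
    ∫ η in s * τ..(s + 1) * τ, ((j + 1/2) * τ - η) ^ (-α)
      = τ ^ (1 - α) * cL1 α (j - s) / (1 - α) := by
  have hjs : (1 : ℝ) ≤ j - s := by
    have : (s : ℝ) + 1 ≤ j := by exact_mod_cast hs
    linarith
  rw [integral_sub_rpow_neg hα, cL1, if_neg (Nat.sub_ne_zero_of_lt hs), Nat.cast_sub hs.le,
    show ((j : ℝ) + 1/2) * τ - s * τ = (j - s + 1/2) * τ by ring,
    show ((j : ℝ) + 1/2) * τ - (s + 1) * τ = (j - s - 1/2) * τ by ring,
    mul_rpow (by linarith) hτ, mul_rpow (by linarith) hτ]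
  ring

theorem integral_rpow_neg_eq_cL1_zero (hα : α < 1) (hτ : 0 ≤ τ) (j : ℕ) :
    ∫ η in j * τ..(j + 1/2) * τ, ((j + 1/2) * τ - η) ^ (-α)
      = τ ^ (1 - α) * cL1 α 0 / (1 - α) := by
  rw [integral_sub_rpow_neg hα, sub_self, zero_rpow (by linarith), sub_zero, cL1, if_pos rfl,
    show ((j : ℝ) + 1/2) * τ - j * τ = τ * 2⁻¹ by ring, mul_rpow hτ (by norm_num),
    inv_rpow (by norm_num), ← rpow_neg (by norm_num), neg_sub]

theorem caputo_sub_halfLayerL1 (hα : α < 1) (hτ : 0 < τ) (j : ℕ) {u : ℝ → ℝ}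
    (hu' : Continuous (deriv u)) :
    caputo α u ((j + 1/2) * τ) - halfLayerL1 α τ j u =
      ((∑ s ∈ range j, ∫ η in s * τ..(s + 1) * τ,
          (deriv u η - slope u (s * τ) ((s + 1) * τ)) * ((j + 1/2) * τ - η) ^ (-α))
        + ∫ η in j * τ..(j + 1/2) * τ,
          (deriv u η - slope u (j * τ) ((j + 1) * τ)) * ((j + 1/2) * τ - η) ^ (-α))
      / Gamma (1 - α) := by
  set T := ((j : ℝ) + 1/2) * τ
  have hΓ1 : Gamma (1 - α) ≠ 0 := (Gamma_pos_of_pos (by linarith)).ne'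
  have hint : ∀ a b, IntervalIntegrable (fun η => deriv u η * (T - η) ^ (-α)) volume a b :=
    fun a b => intervalIntegrable_mul_sub_rpow_neg hα hu'.continuousOn
  have herr : ∀ a b c, ∫ η in a..c, (deriv u η - slope u a b) * (T - η) ^ (-α)
      = (∫ η in a..c, deriv u η * (T - η) ^ (-α))
        - slope u a b * ∫ η in a..c, (T - η) ^ (-α) := by
    intro a b c
    simp_rw [sub_mul]
    rw [integral_sub (hint a c) (intervalIntegrable_mul_sub_rpow_neg (g := fun _ => slope u a b)
      hα continuousOn_const), intervalIntegral.integral_const_mul]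
  have hcap : caputo α u T =
      ((∑ s ∈ range j, ∫ η in s * τ..(s + 1) * τ, deriv u η * (T - η) ^ (-α))
      + ∫ η in j * τ..T, deriv u η * (T - η) ^ (-α)) / Gamma (1 - α) := by
    have hsplit := sum_integral_adjacent_intervals (a := fun s : ℕ => (s : ℝ) * τ) (n := j)
      fun k _ => hint _ _
    push_cast at hsplit
    rw [hsplit, zero_mul, integral_add_adjacent_intervals (hint _ _) (hint _ _), caputo,
      one_div_mul_eq_div]
  have hL1 : halfLayerL1 α τ j u = ((∑ s ∈ range j,
        slope u (s * τ) ((s + 1) * τ) * ∫ η in s * τ..(s + 1) * τ, (T - η) ^ (-α))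
      + slope u (j * τ) ((j + 1) * τ) * ∫ η in j * τ..T, (T - η) ^ (-α))
      / Gamma (1 - α) := by
    rw [halfLayerL1, sum_range_succ, mul_add, mul_sum, add_div, sum_div]
    congr 1
    · refine sum_congr rfl fun s hs => ?_
      rw [integral_rpow_neg_eq_cL1 hα hτ.le (mem_range.1 hs), slope_def_field, Gamma_two_sub hα]
      field_simp
      ring
    · rw [integral_rpow_neg_eq_cL1_zero hα hτ.le, Nat.sub_self, slope_def_field,
        Gamma_two_sub hα]
      field_simp
      ring
  rw [hcap, hL1, ← sub_div, herr, sum_congr rfl fun s _ => herr _ _ _, sum_sub_distrib]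
  ring

end HalfLayer

theorem lipschitzOnWith_deriv_of_abs_iteratedDeriv_two_le {u : ℝ → ℝ} (hu : ContDiff ℝ 2 u)
    {s : Set ℝ} (hs : Convex ℝ s) {M : ℝ} (hM : ∀ t ∈ s, |iteratedDeriv 2 u t| ≤ M) :
    LipschitzOnWith M.toNNReal (deriv u) s := by
  have hd : Differentiable ℝ (deriv u) := by
    simpa using hu.differentiable_iteratedDeriv 1 (by norm_num)
  refine hs.lipschitzOnWith_of_nnnorm_deriv_le (fun x _ => hd x) fun x hx => ?_
  rw [← norm_toNNReal]
  exact Real.toNNReal_le_toNNReal (by simpa [iteratedDeriv_succ] using hM x hx)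

section Bound

variable {α τ : ℝ} {u f : ℝ → ℝ} {K : ℝ≥0}

theorem abs_sum_integral_sub_slope_mul_rpow_neg_le (hα : 0 ≤ α) (hτ : 0 < τ) (j : ℕ)
    (hu : ∀ x ∈ Icc 0 (j * τ), HasDerivAt u (f x) x)
    (hf : LipschitzOnWith K f (Icc 0 (j * τ))) :
    |∑ s ∈ range j, ∫ η in s * τ..(s + 1) * τ,
        (f η - slope u (s * τ) ((s + 1) * τ)) * ((j + 1/2) * τ - η) ^ (-α)|
      ≤ K * τ ^ 2 / 8 * (τ / 2) ^ (-α) := by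
  set T := ((j : ℝ) + 1/2) * τ
  set g : ℕ → ℝ := fun s => (T - s * τ) ^ (-α)
  have hterm : ∀ s ∈ range j, |∫ η in s * τ..(s + 1) * τ,
      (f η - slope u (s * τ) ((s + 1) * τ)) * (T - η) ^ (-α)|
        ≤ K * τ ^ 2 / 8 * (g (s + 1) - g s) := by
    intro s hs
    have hsj : (s : ℝ) + 1 ≤ j := by exact_mod_cast mem_range.1 hs
    have hsub : Icc (s * τ) ((s + 1) * τ) ⊆ Icc 0 (j * τ) :=
      Icc_subset_Icc (by positivity) (by gcongr)
    have h := abs_integral_sub_slope_mul_rpow_neg_le hα (fun x hx => hu x (hsub hx)) (hf.mono hsub)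
      (by linarith) (show (s + 1) * τ < T by simp only [T]; nlinarith)
    simp only [g]
    push_cast
    convert h using 3
    ring
  calc _ ≤ ∑ s ∈ range j, K * τ ^ 2 / 8 * (g (s + 1) - g s) :=
        (abs_sum_le_sum_abs _ _).trans (sum_le_sum hterm)
    _ = K * τ ^ 2 / 8 * (g j - g 0) := by rw [← mul_sum, sum_range_sub]
    _ ≤ K * τ ^ 2 / 8 * (τ / 2) ^ (-α) := by
        have hgj : g j = (τ / 2) ^ (-α) := by simp only [g, T]; ring_nf
        have hg0 : 0 ≤ g 0 :=
          rpow_nonneg (by simp only [T, CharP.cast_eq_zero, zero_mul, sub_zero]; positivity) _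
        rw [hgj]
        gcongr
        linarith

end Bound

theorem rpow_bound_div_Gamma_eq {α τ : ℝ} (hα : α < 1) (hτ : 0 < τ) (M : ℝ) :
    (M * τ ^ 2 / 8 * (τ / 2) ^ (-α) + M * τ / 2 * ((τ / 2) ^ (1 - α) / (1 - α)))
        / Gamma (1 - α)
      = 2 ^ α * M / (4 * Gamma (2 - α)) * ((1 - α) / 2 + 1) * τ ^ (2 - α) := by
  have h1α : 1 - α ≠ 0 := by linarith
  have hΓ1 : Gamma (1 - α) ≠ 0 := (Gamma_pos_of_pos (by linarith)).ne'
  have hτ1 : τ ^ (1 - α) = τ * τ ^ (-α) := by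
    rw [sub_eq_add_neg, rpow_add hτ, rpow_one]
  have hτ2 : τ ^ (2 - α) = τ ^ 2 * τ ^ (-α) := by
    rw [sub_eq_add_neg, rpow_add hτ, rpow_two]
  rw [Gamma_two_sub hα, hτ2, div_rpow hτ.le two_pos.le, div_rpow hτ.le two_pos.le, hτ1,
    rpow_neg two_pos.le, rpow_sub two_pos, rpow_one]
  field_simp
  ring

/-- Lemma 2: the half-layer L1 approximation error satisfies
|∂₀ₜ^α u(t_{j+1/2}) - Δ₀ₜ^α u| ≤ (2^α M₂ / (4 Γ(2-α))) ((1-α)/2 + 1) τ^{2-α}. -/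
theorem stmt_8 (α τ : ℝ) (hα0 : 0 < α) (hα1 : α < 1) (hτ : 0 < τ)
    (j : ℕ) (u : ℝ → ℝ) (hu : ContDiff ℝ 2 u) (M₂ : ℝ)
    (hM : ∀ t ∈ Icc (0 : ℝ) (((j : ℝ) + 1) * τ), |iteratedDeriv 2 u t| ≤ M₂) :
    |caputo α u (((j : ℝ) + 1/2) * τ)
        - (τ ^ (1 - α) / Real.Gamma (2 - α))
          * ∑ s ∈ Finset.range (j + 1),
              cL1 α (j - s) * (u (((s : ℝ) + 1) * τ) - u ((s : ℝ) * τ)) / τ|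
      ≤ (2 : ℝ) ^ α * M₂ / (4 * Real.Gamma (2 - α)) * ((1 - α) / 2 + 1) * τ ^ (2 - α) := by
  have hder : ∀ x, HasDerivAt u (deriv u x) x := fun x =>
    (hu.differentiable (by norm_num) x).hasDerivAt
  have hcont : Continuous (deriv u) := by
    simpa using hu.continuous_iteratedDeriv 1 (by norm_num)
  have hM0 : 0 ≤ M₂ := (abs_nonneg _).trans (hM 0 ⟨le_rfl, by positivity⟩)
  have hLip := lipschitzOnWith_deriv_of_abs_iteratedDeriv_two_le hu (convex_Icc _ _) hM
  have hinterior := abs_sum_integral_sub_slope_mul_rpow_neg_le hα0.le hτ j (fun x _ => hder x)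
    (hLip.mono (Icc_subset_Icc_right (by gcongr; linarith)))
  have hlast := abs_integral_sub_slope_mul_rpow_neg_le_of_mem (a := j * τ) (T := (j + 1/2) * τ)
    hα1 (fun x _ => hder x) (hLip.mono (Icc_subset_Icc_left (by positivity))) (by nlinarith)
    ⟨by nlinarith, by nlinarith⟩
  rw [show ((j : ℝ) + 1) * τ - j * τ = τ by ring,
    show ((j : ℝ) + 1/2) * τ - j * τ = τ / 2 by ring] at hlast
  rw [Real.coe_toNNReal _ hM0] at hinterior hlast
  change |caputo α u _ - halfLayerL1 α τ j u| ≤ _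
  rw [caputo_sub_halfLayerL1 hα1 hτ j hcont, abs_div, abs_of_pos (Gamma_pos_of_pos (by linarith)),
    ← rpow_bound_div_Gamma_eq hα1 hτ]
  gcongr
  exact (abs_add_le _ _).trans (add_le_add hinterior hlast)
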